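/- Let σ ∈ S_d be a permutation and let c be a cycle of σ of length n ≥ 2. The number of transpositions τ = (i j) with both i and j in the support of c such that τσ has, in place of c, two cycles of lengths m' and m'' with m' + m'' = n, is n if m' ≠ m'' and n/2 if m' = m''. -/

import Mathlib

/-!
Write `n = #s` for the support `s` of the cycle `c`, on which `σ` acts as an `n`-cycle. If
`b = σᵏ a` with `0 < k < n`, then `swap a b * σ` sends `σʲ a ↦ σʲ⁺¹ a` for `j + 1 < k` and
`σᵏ⁻¹ a ↦ a`, so it closes `a, σ a, …, σᵏ⁻¹ a` into a cycle of length `k`; since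
`swap a b = swap b (σⁿ⁻ᵏ b)`, the remaining `n - k` points form the cycle through `b`.
Hence the transpositions cutting off pieces of sizes `m₁` and `m₂` are exactly the
`swap a (σ^m₁ a)` with `a ∈ s`. The map `a ↦ swap a (σ^m₁ a)` is injective on `s`, except
that `a` and `σ^m₁ a` give the same transposition when `2 m₁ = n`.
-/

open Equiv Equiv.Perm Finset

namespace Equiv.Perm

variable {α : Type*}

def cuttingSwaps [DecidableEq α] [Fintype α] (σ : Perm α) (s : Finset α) (m₁ m₂ : ℕ) :
    Set (Perm α) :=
  {τ | τ.IsSwap ∧ τ.support ⊆ s ∧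
    ∃ x ∈ s, ∃ y ∈ s, ¬ (τ * σ).SameCycle x y ∧
      ({z ∈ (s : Set α) | (τ * σ).SameCycle x z}).ncard = m₁ ∧
      ({z ∈ (s : Set α) | (τ * σ).SameCycle y z}).ncard = m₂}

namespace IsCycleOn

variable {σ : Perm α} {s : Finset α} {a b x : α} {k m : ℕ}

theorem pow_apply_mem (hσ : σ.IsCycleOn s) (ha : a ∈ s) (k : ℕ) : (σ ^ k) a ∈ s :=
  hσ.1.mapsTo.perm_pow k ha

theorem pow_apply_ne_self (hσ : σ.IsCycleOn s) (ha : a ∈ s) (hk0 : 0 < k) (hk : k < #s) :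
    (σ ^ k) a ≠ a :=
  fun h => Nat.not_dvd_of_pos_of_lt hk0 hk ((hσ.pow_apply_eq ha).1 h)

theorem injOn_pow_apply (hσ : σ.IsCycleOn s) (ha : a ∈ s) :
    Set.InjOn (fun j => (σ ^ j) a) (Set.Iio #s) :=
  fun _ hi _ hj h => ((hσ.pow_apply_eq_pow_apply ha).1 h).eq_of_lt_of_lt hi hj

variable [DecidableEq α]

theorem swap_pow_apply_eq_swap_pow_sub (hσ : σ.IsCycleOn s) (ha : a ∈ s) (hk : k ≤ #s) :
    swap a ((σ ^ k) a) = swap ((σ ^ k) a) ((σ ^ (#s - k)) ((σ ^ k) a)) := by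
  rw [← mul_apply, ← pow_add, Nat.sub_add_cancel hk, hσ.pow_card_apply ha, swap_comm]

theorem pow_swap_mul_apply_of_lt (hσ : σ.IsCycleOn s) (ha : a ∈ s) (hk : k < #s) :
    ∀ j < k, ((swap a ((σ ^ k) a) * σ) ^ j) a = (σ ^ j) a
  | 0, _ => rfl
  | j + 1, hj => by
    rw [pow_succ', mul_apply, pow_swap_mul_apply_of_lt hσ ha hk j (by omega), mul_apply,
      ← mul_apply σ, ← pow_succ']
    refine swap_apply_of_ne_of_ne (hσ.pow_apply_ne_self ha j.succ_pos (by omega)) fun h => ?_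
    exact hj.ne (hσ.injOn_pow_apply ha (show j + 1 < #s by omega) hk h)

theorem pow_swap_mul_apply_self (hσ : σ.IsCycleOn s) (ha : a ∈ s) (hk0 : 0 < k)
    (hk : k < #s) : ((swap a ((σ ^ k) a) * σ) ^ k) a = a := by
  obtain ⟨j, rfl⟩ : ∃ j, k = j + 1 := ⟨k - 1, by omega⟩
  rw [pow_succ', mul_apply, pow_swap_mul_apply_of_lt hσ ha hk j j.lt_succ_self, mul_apply,
    ← mul_apply σ, ← pow_succ', swap_apply_right]

theorem sameCycle_swap_mul_iff [Finite α] (hσ : σ.IsCycleOn s) (ha : a ∈ s) (hk0 : 0 < k)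
    (hk : k < #s) {z : α} :
    (swap a ((σ ^ k) a) * σ).SameCycle a z ↔ ∃ j < k, (σ ^ j) a = z := by
  constructor
  · rintro h
    obtain ⟨i, -, rfl⟩ := h.exists_pow_eq'
    have hper : Function.IsPeriodicPt (swap a ((σ ^ k) a) * σ) k a := by
      rw [Function.IsPeriodicPt, Function.IsFixedPt, ← coe_pow]
      exact hσ.pow_swap_mul_apply_self ha hk0 hk
    refine ⟨i % k, Nat.mod_lt i hk0, ?_⟩
    rw [← hσ.pow_swap_mul_apply_of_lt ha hk _ (Nat.mod_lt i hk0)]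
    simpa only [coe_pow] using hper.iterate_mod_apply i
  · rintro ⟨j, hj, rfl⟩
    rw [← hσ.pow_swap_mul_apply_of_lt ha hk j hj]
    exact sameCycle_pow_right.2 (SameCycle.refl _ _)

theorem ncard_sameCycle_swap_mul [Finite α] (hσ : σ.IsCycleOn s) (ha : a ∈ s) (hk0 : 0 < k)
    (hk : k < #s) (hx : (swap a ((σ ^ k) a) * σ).SameCycle a x) :
    ({z ∈ (s : Set α) | (swap a ((σ ^ k) a) * σ).SameCycle x z}).ncard = k := by
  have hclass : {z ∈ (s : Set α) | (swap a ((σ ^ k) a) * σ).SameCycle x z} =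
      (fun j => (σ ^ j) a) '' Set.Iio k := by
    ext z
    simp only [Set.mem_image, Set.mem_Iio, mem_coe]
    constructor
    · exact fun ⟨_, h⟩ => (hσ.sameCycle_swap_mul_iff ha hk0 hk).1 (hx.trans h)
    · rintro ⟨j, hj, rfl⟩
      exact ⟨hσ.pow_apply_mem ha j,
        hx.symm.trans ((hσ.sameCycle_swap_mul_iff ha hk0 hk).2 ⟨j, hj, rfl⟩)⟩
  rw [hclass, ((hσ.injOn_pow_apply ha).mono (Set.Iio_subset_Iio hk.le)).ncard_image,
    ← coe_Iio, Set.ncard_coe_finset, Nat.card_Iio]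

theorem not_sameCycle_swap_mul [Finite α] (hσ : σ.IsCycleOn s) (ha : a ∈ s) (hk0 : 0 < k)
    (hk : k < #s) : ¬ (swap a ((σ ^ k) a) * σ).SameCycle a ((σ ^ k) a) := by
  rw [sameCycle_swap_mul_iff hσ ha hk0 hk]
  rintro ⟨j, hj, h⟩
  exact hj.ne (hσ.injOn_pow_apply ha (hj.trans hk) hk h)

theorem sameCycle_swap_mul_or [Finite α] (hσ : σ.IsCycleOn s) (ha : a ∈ s) (hk0 : 0 < k)
    (hk : k < #s) (hx : x ∈ s) :
    (swap a ((σ ^ k) a) * σ).SameCycle a x ∨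
      (swap a ((σ ^ k) a) * σ).SameCycle ((σ ^ k) a) x := by
  obtain ⟨i, hi, rfl⟩ := hσ.exists_pow_eq ha hx
  rcases lt_or_ge i k with hik | hki
  · exact Or.inl ((hσ.sameCycle_swap_mul_iff ha hk0 hk).2 ⟨i, hik, rfl⟩)
  · right
    rw [hσ.swap_pow_apply_eq_swap_pow_sub ha hk.le,
      sameCycle_swap_mul_iff hσ (hσ.pow_apply_mem ha k) (by omega) (by omega)]
    exact ⟨i - k, by omega, by rw [← mul_apply, ← pow_add, Nat.sub_add_cancel hki]⟩

theorem exists_swap_eq_swap_pow_apply [Finite α] (hσ : σ.IsCycleOn s) {u v : α} (hu : u ∈ s)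
    (hv : v ∈ s) (huv : u ≠ v) (hx : x ∈ s) :
    ∃ a ∈ s, ∃ k, 0 < k ∧ k < #s ∧ swap u v = swap a ((σ ^ k) a) ∧
      (swap u v * σ).SameCycle a x := by
  obtain ⟨k, hk, rfl⟩ := hσ.exists_pow_eq hu hv
  have hk0 : 0 < k := Nat.pos_of_ne_zero fun h => huv (by rw [h, pow_zero, one_apply])
  rcases hσ.sameCycle_swap_mul_or hu hk0 hk hx with h | h
  · exact ⟨u, hu, k, hk0, hk, rfl, h⟩
  · exact ⟨_, hσ.pow_apply_mem hu k, #s - k, by omega, by omega,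
      hσ.swap_pow_apply_eq_swap_pow_sub hu hk.le, h⟩

theorem cuttingSwaps_eq_image [Fintype α] (hσ : σ.IsCycleOn s) {m₁ m₂ : ℕ} (hm₁ : 0 < m₁)
    (hm₂ : 0 < m₂) (hsum : m₁ + m₂ = #s) :
    cuttingSwaps σ s m₁ m₂ = (fun a => swap a ((σ ^ m₁) a)) '' s := by
  ext τ
  constructor
  · rintro ⟨⟨u, v, huv, rfl⟩, hsub, x, hx, -, -, -, hx₁, -⟩
    rw [support_swap huv, insert_subset_iff, singleton_subset_iff] at hsub
    obtain ⟨a, ha, k, hk0, hk, hswap, hax⟩ :=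
      hσ.exists_swap_eq_swap_pow_apply hsub.1 hsub.2 huv hx
    rw [hswap] at hax hx₁ ⊢
    obtain rfl := (hσ.ncard_sameCycle_swap_mul ha hk0 hk hax).symm.trans hx₁
    exact ⟨a, ha, rfl⟩
  · rintro ⟨a, ha, rfl⟩
    have hm₁s : m₁ < #s := by omega
    have hb := hσ.pow_apply_mem ha m₁
    have hab := (hσ.pow_apply_ne_self ha hm₁ hm₁s).symm
    refine ⟨⟨a, _, hab, rfl⟩, ?_, a, ha, _, hb, hσ.not_sameCycle_swap_mul ha hm₁ hm₁s,
      hσ.ncard_sameCycle_swap_mul ha hm₁ hm₁s .rfl, ?_⟩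
    · rw [support_swap hab, insert_subset_iff, singleton_subset_iff]
      exact ⟨ha, hb⟩
    · beta_reduce
      rw [hσ.swap_pow_apply_eq_swap_pow_sub ha hm₁s.le]
      exact (hσ.ncard_sameCycle_swap_mul hb (by omega) (by omega) .rfl).trans (by omega)

theorem eq_or_eq_of_swap_pow_apply_eq (hσ : σ.IsCycleOn s) (ha : a ∈ s) (hb : b ∈ s)
    (hm0 : 0 < m) (hm : m < #s) (h : swap b ((σ ^ m) b) = swap a ((σ ^ m) a)) :
    b = a ∨ b = (σ ^ m) a ∧ 2 * m = #s := by
  have hne : swap a ((σ ^ m) a) b ≠ b := by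
    rw [← h, swap_apply_left]
    exact hσ.pow_apply_ne_self hb hm0 hm
  obtain ⟨-, rfl | rfl⟩ := swap_apply_ne_self_iff.1 hne
  · exact Or.inl rfl
  refine Or.inr ⟨rfl, Nat.eq_of_dvd_of_lt_two_mul (by omega) ?_ (by omega)⟩
  have hback := congrArg (· ((σ ^ m) a)) h
  simp only [swap_apply_left, swap_apply_right] at hback
  rwa [← mul_apply, ← pow_add, hσ.pow_apply_eq ha, ← two_mul] at hback

theorem injOn_swap_pow_apply (hσ : σ.IsCycleOn s) (hm0 : 0 < m) (hm : m < #s)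
    (h2 : 2 * m ≠ #s) : Set.InjOn (fun a => swap a ((σ ^ m) a)) s :=
  fun _ ha _ hb h =>
    ((hσ.eq_or_eq_of_swap_pow_apply_eq ha hb hm0 hm h.symm).resolve_right fun h' => h2 h'.2).symm

theorem filter_swap_pow_apply_eq [Fintype α] (hσ : σ.IsCycleOn s) (ha : a ∈ s) (hm0 : 0 < m)
    (h2 : 2 * m = #s) :
    {b ∈ s | swap b ((σ ^ m) b) = swap a ((σ ^ m) a)} = {a, (σ ^ m) a} := by
  ext b
  simp only [mem_filter, mem_insert, mem_singleton]
  constructor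
  · rintro ⟨hb, h⟩
    exact (hσ.eq_or_eq_of_swap_pow_apply_eq ha hb hm0 (by omega) h).imp_right And.left
  · rintro (rfl | rfl)
    · exact ⟨ha, rfl⟩
    · refine ⟨hσ.pow_apply_mem ha m, ?_⟩
      rw [hσ.swap_pow_apply_eq_swap_pow_sub ha (by omega), show #s - m = m by omega]

theorem two_mul_card_image_swap_pow_apply [Fintype α] (hσ : σ.IsCycleOn s) (hm0 : 0 < m)
    (h2 : 2 * m = #s) : 2 * #(s.image fun a => swap a ((σ ^ m) a)) = #s := by
  rw [card_eq_sum_card_image (fun a => swap a ((σ ^ m) a)) s, mul_comm, ← smul_eq_mul,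
    ← sum_const]
  refine sum_congr rfl fun τ hτ => ?_
  obtain ⟨a, ha, rfl⟩ := mem_image.1 hτ
  rw [hσ.filter_swap_pow_apply_eq ha hm0 h2,
    card_pair (hσ.pow_apply_ne_self ha hm0 (by omega)).symm]

end IsCycleOn

end Equiv.Perm

theorem cut_count_general (d : ℕ) (σ c : Equiv.Perm (Fin d))
    (hc : c ∈ σ.cycleFactorsFinset) (n m₁ m₂ : ℕ)
    (hn : c.support.card = n)
    (hm₁ : 1 ≤ m₁) (hm₂ : 1 ≤ m₂) (hsum : m₁ + m₂ = n) :
    ({τ : Equiv.Perm (Fin d) | τ.IsSwap ∧ τ.support ⊆ c.support ∧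
      ∃ x ∈ c.support, ∃ y ∈ c.support,
        ¬ (τ * σ).SameCycle x y ∧
        ({z ∈ (c.support : Set (Fin d)) | (τ * σ).SameCycle x z}).ncard = m₁ ∧
        ({z ∈ (c.support : Set (Fin d)) | (τ * σ).SameCycle y z}).ncard = m₂}).ncard
      = if m₁ = m₂ then n / 2 else n := by
  have hσ := isCycleOn_support_of_mem_cycleFactorsFinset hc
  subst hn
  change (cuttingSwaps σ c.support m₁ m₂).ncard = _
  rw [hσ.cuttingSwaps_eq_image hm₁ hm₂ hsum]
  split_ifs with h
  · subst h
    rw [← coe_image, Set.ncard_coe_finset]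
    have := hσ.two_mul_card_image_swap_pow_apply hm₁ (by omega)
    omega
  · rw [(hσ.injOn_swap_pow_apply hm₁ (by omega) (by omega)).ncard_image, Set.ncard_coe_finset]

/-- Cut part of cut-and-join: for a cycle `c` of `σ` of length `n ≥ 2`, the number of
transpositions supported inside `c` that cut it into two cycles of lengths `m₁`, `m₂`
(with `m₁ + m₂ = n`) is `n` if `m₁ ≠ m₂` and `n / 2` if `m₁ = m₂`. -/
theorem cut_count (d : ℕ) (σ c : Equiv.Perm (Fin d))
    (hc : c ∈ σ.cycleFactorsFinset) (n m₁ m₂ : ℕ)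
    (hn : c.support.card = n) (h2 : 2 ≤ n)
    (hm₁ : 1 ≤ m₁) (hm₂ : 1 ≤ m₂) (hsum : m₁ + m₂ = n) :
    ({τ : Equiv.Perm (Fin d) | τ.IsSwap ∧ τ.support ⊆ c.support ∧
      ∃ x ∈ c.support, ∃ y ∈ c.support,
        ¬ (τ * σ).SameCycle x y ∧
        ({z ∈ (c.support : Set (Fin d)) | (τ * σ).SameCycle x z}).ncard = m₁ ∧
        ({z ∈ (c.support : Set (Fin d)) | (τ * σ).SameCycle y z}).ncard = m₂}).ncard
      = if m₁ = m₂ then n / 2 else n :=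
  cut_count_general d σ c hc n m₁ m₂ hn hm₁ hm₂ hsum
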